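/- Let e(w) = ‖A w − b‖² + λ₁‖w‖² + λ₂‖Ψw‖² with A having columns g₁,…,g_n satisfying ‖g_j‖ ≤ ∇_max for all j. Then for any k-sparse difference vector v − w (i.e., at most k nonzero coordinates), e(v) − e(w) − ⟨∇e(w), v − w⟩ ≤ (λ₁ + λ₂‖Ψ‖² + k∇_max²)‖v − w‖², where ‖Ψ‖ is the spectral (operator) norm of Ψ. -/

import Mathlib

open scoped RealInnerProductSpace

/-- Matrix–vector multiplication landing in Euclidean space. -/
noncomputable def mulVecE {d n : ℕ} (A : Matrix (Fin d) (Fin n) ℝ)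
    (w : EuclideanSpace ℝ (Fin n)) : EuclideanSpace ℝ (Fin d) :=
  (WithLp.equiv 2 (Fin d → ℝ)).symm (A.mulVec ((WithLp.equiv 2 (Fin n → ℝ)) w))

/-- The j-th column of a matrix, as a Euclidean vector. -/
noncomputable def colE {d n : ℕ} (A : Matrix (Fin d) (Fin n) ℝ) (j : Fin n) :
    EuclideanSpace ℝ (Fin d) :=
  (WithLp.equiv 2 (Fin d → ℝ)).symm (A.transpose j)

/-- The ℓ²→ℓ² operator (spectral) norm of a matrix. -/
noncomputable def opNormE {d n : ℕ} (A : Matrix (Fin d) (Fin n) ℝ) : ℝ :=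
  ‖LinearMap.toContinuousLinearMap (Matrix.toEuclideanLin A)‖

/-- The smallest singular value of a matrix: the infimum of ‖Ax‖ over unit vectors x. -/
noncomputable def sminE {d n : ℕ} (A : Matrix (Fin d) (Fin n) ℝ) : ℝ :=
  sInf ((fun x : EuclideanSpace ℝ (Fin n) => ‖mulVecE A x‖) '' {x | ‖x‖ = 1})

/-!
The objective is quadratic, so with `u = v - w` its remainder after the first-order term is
exactly `‖A u‖² + λ₁‖u‖² + λ₂‖Ψ u‖²`. The last term is at most `λ₂‖Ψ‖²‖u‖²`, and `A u` is a
combination of at most `k` columns, so the triangle inequality followed by Cauchy–Schwarz on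
the `k` coefficients gives `‖A u‖² ≤ k ∇max² ‖u‖²`.
-/

section RegularizedLeastSquares

variable {E F G : Type*} [NormedAddCommGroup E] [InnerProductSpace ℝ E] [CompleteSpace E]
  [NormedAddCommGroup F] [InnerProductSpace ℝ F] [CompleteSpace F]
  [NormedAddCommGroup G] [InnerProductSpace ℝ G] [CompleteSpace G]
  (T : E →L[ℝ] F) (S : E →L[ℝ] G) (b : F) (l₁ l₂ : ℝ)

def regularizedLeastSquares (x : E) : ℝ :=
  ‖T x - b‖ ^ 2 + l₁ * ‖x‖ ^ 2 + l₂ * ‖S x‖ ^ 2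

noncomputable def regularizedLeastSquaresGrad (x : E) : E :=
  (2 : ℝ) • T.adjoint (T x - b) + (2 * l₁) • x + (2 * l₂) • S.adjoint (S x)

theorem hasGradientAt_regularizedLeastSquares (x : E) :
    HasGradientAt (regularizedLeastSquares T S b l₁ l₂)
      (regularizedLeastSquaresGrad T S b l₁ l₂ x) x := by
  rw [hasGradientAt_iff_hasFDerivAt]
  refine ((((T.hasFDerivAt.sub_const b).norm_sq).add
    (((hasFDerivAt_id x).norm_sq).const_mul l₁)).add
    (S.hasFDerivAt.norm_sq.const_mul l₂)).congr_fderiv ?_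
  ext u
  simp [regularizedLeastSquaresGrad, ContinuousLinearMap.adjoint_inner_left]
  ring

theorem regularizedLeastSquares_add_sub_sub_inner (x u : E) :
    regularizedLeastSquares T S b l₁ l₂ (x + u) - regularizedLeastSquares T S b l₁ l₂ x
        - ⟪regularizedLeastSquaresGrad T S b l₁ l₂ x, u⟫
      = ‖T u‖ ^ 2 + l₁ * ‖u‖ ^ 2 + l₂ * ‖S u‖ ^ 2 := by
  have hT : T (x + u) - b = (T x - b) + T u := by rw [map_add]; abel
  simp only [regularizedLeastSquares]
  rw [hT]
  simp only [regularizedLeastSquaresGrad, map_add,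
    norm_add_sq_real, inner_add_left, real_inner_smul_left,
    ContinuousLinearMap.adjoint_inner_left]
  ring

end RegularizedLeastSquares

theorem norm_sum_smul_sq_le {F ι : Type*} [SeminormedAddCommGroup F] [NormedSpace ℝ F]
    (s : Finset ι) (c : ι → ℝ) (g : ι → F) {M : ℝ} (hg : ∀ j ∈ s, ‖g j‖ ≤ M) :
    ‖∑ j ∈ s, c j • g j‖ ^ 2 ≤ s.card * M ^ 2 * ∑ j ∈ s, c j ^ 2 := by
  have hle : ‖∑ j ∈ s, c j • g j‖ ≤ M * ∑ j ∈ s, |c j| := by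
    calc ‖∑ j ∈ s, c j • g j‖ ≤ ∑ j ∈ s, |c j| * ‖g j‖ := by
          simpa only [norm_smul, Real.norm_eq_abs] using norm_sum_le s (fun j => c j • g j)
      _ ≤ ∑ j ∈ s, |c j| * M := by gcongr with j hj; exact hg j hj
      _ = M * ∑ j ∈ s, |c j| := by rw [Finset.mul_sum]; simp only [mul_comm]
  calc ‖∑ j ∈ s, c j • g j‖ ^ 2 ≤ (M * ∑ j ∈ s, |c j|) ^ 2 := by gcongr
    _ = M ^ 2 * (∑ j ∈ s, |c j|) ^ 2 := by ring
    _ ≤ M ^ 2 * (s.card * ∑ j ∈ s, |c j| ^ 2) := by gcongr; exact sq_sum_le_card_mul_sum_sq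
    _ = s.card * M ^ 2 * ∑ j ∈ s, c j ^ 2 := by simp only [sq_abs]; ring

theorem mulVecE_eq_sum_smul_colE {d n : ℕ} (A : Matrix (Fin d) (Fin n) ℝ)
    (u : EuclideanSpace ℝ (Fin n)) : mulVecE A u = ∑ j, u j • colE A j := by
  ext i
  simp [mulVecE, colE, Matrix.mulVec, dotProduct, mul_comm]

theorem norm_mulVecE_sq_le_ncard_support_mul {d n : ℕ} (A : Matrix (Fin d) (Fin n) ℝ) {M : ℝ}
    (hcols : ∀ j, ‖colE A j‖ ≤ M) (u : EuclideanSpace ℝ (Fin n)) :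
    ‖mulVecE A u‖ ^ 2 ≤ (Function.support fun j => u j).ncard * M ^ 2 * ‖u‖ ^ 2 := by
  classical
  set s := Finset.univ.filter fun j => u j ≠ 0
  have hsupp : (Function.support fun j => u j) = s := by ext j; simp [s]
  have hsum : mulVecE A u = ∑ j ∈ s, u j • colE A j := by
    rw [mulVecE_eq_sum_smul_colE, Finset.sum_filter_of_ne]; exact fun j _ h hj => h (by simp [hj])
  calc ‖mulVecE A u‖ ^ 2 ≤ s.card * M ^ 2 * ∑ j ∈ s, u j ^ 2 :=
        hsum ▸ norm_sum_smul_sq_le s u (colE A) fun j _ => hcols j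
    _ ≤ (Function.support fun j => u j).ncard * M ^ 2 * ‖u‖ ^ 2 := by
        rw [hsupp, Set.ncard_coe_finset, EuclideanSpace.real_norm_sq_eq]
        gcongr
        exact s.subset_univ

theorem stmt2_general {d n m : ℕ} (k : ℕ)
    (A : Matrix (Fin d) (Fin n) ℝ) (b : EuclideanSpace ℝ (Fin d))
    (Ψ : Matrix (Fin m) (Fin n) ℝ) (lam₁ lam₂ gradmax : ℝ)
    (hlam₂ : 0 ≤ lam₂)
    (hcols : ∀ j : Fin n, ‖colE A j‖ ≤ gradmax)
    (e : EuclideanSpace ℝ (Fin n) → ℝ)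
    (he : ∀ w, e w = ‖mulVecE A w - b‖ ^ 2 + lam₁ * ‖w‖ ^ 2 + lam₂ * ‖mulVecE Ψ w‖ ^ 2) :
    ∀ v w : EuclideanSpace ℝ (Fin n),
      (Function.support fun j => (v - w) j).ncard ≤ k →
      e v - e w - ⟪gradient e w, v - w⟫ ≤
        (lam₁ + lam₂ * opNormE Ψ ^ 2 + k * gradmax ^ 2) * ‖v - w‖ ^ 2 := by
  intro v w hsupp
  set T := LinearMap.toContinuousLinearMap (Matrix.toEuclideanLin A)
  set S := LinearMap.toContinuousLinearMap (Matrix.toEuclideanLin Ψ)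
  have he' : e = regularizedLeastSquares T S b lam₁ lam₂ := funext he
  have hA : ‖T (v - w)‖ ^ 2 ≤ k * gradmax ^ 2 * ‖v - w‖ ^ 2 :=
    (norm_mulVecE_sq_le_ncard_support_mul A hcols (v - w)).trans (by gcongr)
  have hΨ : ‖S (v - w)‖ ≤ opNormE Ψ * ‖v - w‖ := S.le_opNorm (v - w)
  calc e v - e w - ⟪gradient e w, v - w⟫
      = ‖T (v - w)‖ ^ 2 + lam₁ * ‖v - w‖ ^ 2 + lam₂ * ‖S (v - w)‖ ^ 2 := by
        rw [he', (hasGradientAt_regularizedLeastSquares T S b lam₁ lam₂ w).gradient,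
          ← regularizedLeastSquares_add_sub_sub_inner, add_sub_cancel]
    _ ≤ k * gradmax ^ 2 * ‖v - w‖ ^ 2 + lam₁ * ‖v - w‖ ^ 2
          + lam₂ * (opNormE Ψ * ‖v - w‖) ^ 2 := by gcongr
    _ = (lam₁ + lam₂ * opNormE Ψ ^ 2 + k * gradmax ^ 2) * ‖v - w‖ ^ 2 := by ring

theorem stmt2 {d n m : ℕ} (k : ℕ)
    (A : Matrix (Fin d) (Fin n) ℝ) (b : EuclideanSpace ℝ (Fin d))
    (Ψ : Matrix (Fin m) (Fin n) ℝ) (lam₁ lam₂ gradmax : ℝ)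
    (hlam₁ : 0 ≤ lam₁) (hlam₂ : 0 ≤ lam₂)
    (hcols : ∀ j : Fin n, ‖colE A j‖ ≤ gradmax)
    (e : EuclideanSpace ℝ (Fin n) → ℝ)
    (he : ∀ w, e w = ‖mulVecE A w - b‖ ^ 2 + lam₁ * ‖w‖ ^ 2 + lam₂ * ‖mulVecE Ψ w‖ ^ 2) :
    ∀ v w : EuclideanSpace ℝ (Fin n),
      (Function.support fun j => (v - w) j).ncard ≤ k →
      e v - e w - ⟪gradient e w, v - w⟫ ≤
        (lam₁ + lam₂ * opNormE Ψ ^ 2 + k * gradmax ^ 2) * ‖v - w‖ ^ 2 :=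
  stmt2_general k A b Ψ lam₁ lam₂ gradmax hlam₂ hcols e he
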